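/- Let X be a binomial random variable with n trials and mean μ = E[X] ≥ 1. Then for any constant integer α ≥ 1, E[X · (log(X+2))^α] ≤ C · μ · (log(μ+2))^α for some universal constant C depending only on α. -/

import Mathlib

/-!
Write `μ = np` and split the sum at `k = μ²`. Below it, `log (k + 2) ≤ 2 log (μ + 2)`. Above it,
`k log (k + 2)^α ≤ 2^α k^(α+1) ≤ 2^α k^(2α+1) / μ^(2α)`, so that part is controlled by the
moment `E[X^(2α+1)] ≤ C μ^(2α+1)`. That moment bound comes from the factorial moments
`E[(X choose r)] = (n choose r) p^r` and `k^r ≤ 2^r k(k-1)⋯(k-r+1) + (2r)^r`.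
-/

open Finset Real
open scoped Nat

lemma Nat.pow_le_two_pow_mul_descFactorial_add (k r : ℕ) :
    k ^ r ≤ 2 ^ r * k.descFactorial r + (2 * r) ^ r := by
  obtain hk | hk := lt_or_ge k (2 * r)
  · exact (Nat.pow_le_pow_left hk.le r).trans (Nat.le_add_left _ _)
  calc k ^ r ≤ (2 * (k + 1 - r)) ^ r := Nat.pow_le_pow_left (by omega) r
    _ ≤ 2 ^ r * k.descFactorial r := by
      rw [Nat.mul_pow]; exact Nat.mul_le_mul_left _ (k.pow_sub_le_descFactorial r)
    _ ≤ _ := Nat.le_add_right _ _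

lemma mul_log_add_two_pow_le {μ x : ℝ} (hμ : 1 ≤ μ) (hx : 0 ≤ x) (α : ℕ) :
    x * log (x + 2) ^ α ≤ 2 ^ α * (log (μ + 2) ^ α * x + x ^ (2 * α + 1) / μ ^ (2 * α)) := by
  have hlog : 0 ≤ log (x + 2) := log_nonneg (by linarith)
  have hlogμ : 0 ≤ log (μ + 2) := log_nonneg (by linarith)
  obtain hsmall | hlarge := le_or_gt x (μ ^ 2)
  · have hlog_le : log (x + 2) ≤ 2 * log (μ + 2) := by
      have := log_le_log (by linarith) (show x + 2 ≤ (μ + 2) ^ 2 by nlinarith)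
      rwa [log_pow, Nat.cast_ofNat] at this
    calc x * log (x + 2) ^ α ≤ x * (2 * log (μ + 2)) ^ α := by gcongr
      _ = 2 ^ α * (log (μ + 2) ^ α * x) := by ring
      _ ≤ _ := by gcongr; exact le_add_of_nonneg_right (by positivity)
  · have hx1 : 1 ≤ x := by nlinarith
    have hlog_le : log (x + 2) ≤ 2 * x := by
      linarith [log_le_sub_one_of_pos (show 0 < x + 2 by linarith)]
    have hμx : μ ^ (2 * α) ≤ x ^ α := by
      rw [pow_mul]; exact pow_le_pow_left₀ (by positivity) hlarge.le α
    calc x * log (x + 2) ^ α ≤ x * (2 * x) ^ α := by gcongr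
      _ = 2 ^ α * (x ^ (α + 1) * μ ^ (2 * α) / μ ^ (2 * α)) := by field_simp; ring
      _ ≤ 2 ^ α * (x ^ (α + 1) * x ^ α / μ ^ (2 * α)) := by gcongr
      _ = 2 ^ α * (x ^ (2 * α + 1) / μ ^ (2 * α)) := by ring
      _ ≤ _ := by gcongr; exact le_add_of_nonneg_left (by positivity)

noncomputable def binomialExpect (n : ℕ) (q : ℝ) (f : ℕ → ℝ) : ℝ :=
  ∑ k ∈ range (n + 1), n.choose k * q ^ k * (1 - q) ^ (n - k) * f k

namespace binomialExpect

variable {n : ℕ} {q : ℝ}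

lemma mono (hq0 : 0 ≤ q) (hq1 : q ≤ 1) {f g : ℕ → ℝ} (hfg : ∀ k, f k ≤ g k) :
    binomialExpect n q f ≤ binomialExpect n q g := by
  have : 0 ≤ 1 - q := by linarith
  exact sum_le_sum fun k _ => mul_le_mul_of_nonneg_left (hfg k) (by positivity)

lemma add (f g : ℕ → ℝ) :
    binomialExpect n q (fun k => f k + g k) = binomialExpect n q f + binomialExpect n q g := by
  simp only [binomialExpect, mul_add, sum_add_distrib]

lemma const_mul (c : ℝ) (f : ℕ → ℝ) :
    binomialExpect n q (fun k => c * f k) = c * binomialExpect n q f := by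
  simp only [binomialExpect, mul_sum]
  exact sum_congr rfl fun k _ => by ring

lemma choose_eq (r : ℕ) :
    binomialExpect n q (fun k => k.choose r) = n.choose r * q ^ r := by
  simp only [binomialExpect]
  obtain hnr | hrn := lt_or_ge n r
  · rw [Nat.choose_eq_zero_of_lt hnr, Nat.cast_zero, zero_mul]
    refine sum_eq_zero fun k hk => ?_
    rw [Nat.choose_eq_zero_of_lt (n := k) (by grind), Nat.cast_zero, mul_zero]
  rw [show n + 1 = r + (n - r + 1) by omega, sum_range_add, sum_eq_zero, zero_add]
  · calc ∑ j ∈ range (n - r + 1), n.choose (r + j) * q ^ (r + j) * (1 - q) ^ (n - (r + j)) *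
            ((r + j).choose r : ℝ)
        = ∑ j ∈ range (n - r + 1), n.choose r * q ^ r *
            (q ^ j * (1 - q) ^ (n - r - j) * (n - r).choose j) := by
          refine sum_congr rfl fun j _ => ?_
          have key : (n.choose (r + j) * (r + j).choose r : ℝ) =
              n.choose r * (n - r).choose j := by
            exact_mod_cast Nat.add_sub_cancel_left r j ▸
              Nat.choose_mul (n := n) (Nat.le_add_right r j)
          rw [pow_add, show n - (r + j) = n - r - j by omega]
          linear_combination (q ^ r * q ^ j * (1 - q) ^ (n - r - j)) * key
      _ = n.choose r * q ^ r := by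
          rw [← mul_sum, ← add_pow, add_sub_cancel, one_pow, mul_one]
  · intro k hk
    rw [Nat.choose_eq_zero_of_lt (n := k) (mem_range.1 hk), Nat.cast_zero, mul_zero]

lemma const (c : ℝ) : binomialExpect n q (fun _ => c) = c := by
  simpa using (const_mul (n := n) (q := q) c (fun k => k.choose 0)).trans
    (congrArg (c * ·) (choose_eq 0))

lemma id_eq : binomialExpect n q (fun k => k) = n * q := by
  simpa using choose_eq (n := n) (q := q) 1

lemma pow_le (hq0 : 0 ≤ q) (hq1 : q ≤ 1) (hμ : 1 ≤ n * q) (r : ℕ) :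
    binomialExpect n q (fun k => (k : ℝ) ^ r) ≤ (2 ^ r + (2 * r) ^ r) * (n * q) ^ r := by
  have hpoint (k : ℕ) : (k : ℝ) ^ r ≤ 2 ^ r * (r ! * k.choose r) + (2 * r) ^ r := by
    exact_mod_cast k.descFactorial_eq_factorial_mul_choose r ▸
      Nat.pow_le_two_pow_mul_descFactorial_add k r
  have hfalling : (r ! * n.choose r : ℝ) * q ^ r ≤ (n * q) ^ r := by
    rw [mul_pow]
    gcongr
    exact_mod_cast n.descFactorial_eq_factorial_mul_choose r ▸ n.descFactorial_le_pow r
  calc binomialExpect n q (fun k => (k : ℝ) ^ r)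
      ≤ binomialExpect n q (fun k => 2 ^ r * (r ! * k.choose r) + (2 * r) ^ r) :=
        mono hq0 hq1 hpoint
    _ = 2 ^ r * ((r ! * n.choose r) * q ^ r) + (2 * r) ^ r := by
        rw [add, const_mul, const_mul, choose_eq, const, mul_assoc]
    _ ≤ 2 ^ r * (n * q) ^ r + (2 * r) ^ r * (n * q) ^ r := by
        gcongr
        exact le_mul_of_one_le_right (by positivity) (one_le_pow₀ hμ)
    _ = _ := by ring

lemma mul_log_add_two_pow_le (hq0 : 0 ≤ q) (hq1 : q ≤ 1) (hμ : 1 ≤ n * q) (α : ℕ) :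
    binomialExpect n q (fun k => k * log (k + 2) ^ α) ≤
      2 ^ α * (1 + (2 ^ (2 * α + 1) + (2 * (2 * α + 1 : ℕ)) ^ (2 * α + 1))) * (n * q) *
        log (n * q + 2) ^ α := by
  set μ : ℝ := n * q
  set M : ℝ := 2 ^ (2 * α + 1) + (2 * (2 * α + 1 : ℕ)) ^ (2 * α + 1)
  have hμ0 : 0 < μ := by linarith
  have hL : 1 ≤ log (μ + 2) ^ α := by
    refine one_le_pow₀ ((le_log_iff_exp_le (by linarith)).2 ?_)
    linarith [exp_one_lt_three]
  calc binomialExpect n q (fun k => k * log (k + 2) ^ α)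
      ≤ binomialExpect n q
          (fun k => 2 ^ α * (log (μ + 2) ^ α * k + (μ ^ (2 * α))⁻¹ * (k : ℝ) ^ (2 * α + 1))) :=
        mono hq0 hq1 fun k => by
          simpa only [div_eq_inv_mul] using _root_.mul_log_add_two_pow_le hμ k.cast_nonneg α
    _ = 2 ^ α * (log (μ + 2) ^ α * μ +
          (μ ^ (2 * α))⁻¹ * binomialExpect n q (fun k => (k : ℝ) ^ (2 * α + 1))) := by
        rw [const_mul, add, const_mul, const_mul, id_eq]
    _ ≤ 2 ^ α * (log (μ + 2) ^ α * μ + (μ ^ (2 * α))⁻¹ * (M * μ ^ (2 * α + 1))) := by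
        gcongr
        exact pow_le hq0 hq1 hμ (2 * α + 1)
    _ = 2 ^ α * (log (μ + 2) ^ α + M) * μ := by
        field_simp
        ring
    _ ≤ 2 ^ α * (1 + M) * μ * log (μ + 2) ^ α := by
        have hM : 0 ≤ M := by positivity
        nlinarith [mul_nonneg (mul_nonneg (pow_nonneg zero_le_two α) hμ0.le)
          (mul_nonneg hM (sub_nonneg.2 hL))]

end binomialExpect

lemma PMF.binomial_apply_toReal (p : NNReal) (h : p ≤ 1) (n : ℕ) (k : Fin (n + 1)) :
    (PMF.binomial p h n k).toReal = n.choose k * (p : ℝ) ^ (k : ℕ) * (1 - p) ^ (n - k) := by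
  simp [PMF.binomial, ENNReal.toReal_sub_of_le (ENNReal.coe_le_one_iff.2 h)]
  ring

lemma PMF.sum_binomial_toReal_mul (p : NNReal) (h : p ≤ 1) (n : ℕ) (f : ℕ → ℝ) :
    ∑ k : Fin (n + 1), (PMF.binomial p h n k).toReal * f k = binomialExpect n p f := by
  simp only [PMF.binomial_apply_toReal]
  exact Fin.sum_univ_eq_sum_range (fun k => n.choose k * (p : ℝ) ^ k * (1 - p) ^ (n - k) * f k) _

/-- for a binomial random variable `X` with `n` trials and mean
`μ = np ≥ 1`, and any integer `α ≥ 1`, `E[X (log(X+2))^α] ≤ C μ (log(μ+2))^α`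
for a constant `C` depending only on `α`. -/
theorem stmt3 (α : ℕ) :
    ∃ C : ℝ, 0 < C ∧ ∀ (n : ℕ) (p : ENNReal) (hp : p ≤ 1),
      1 ≤ (n : ℝ) * p.toReal →
      ∑ k : Fin (n + 1),
          ((PMF.binomial p.toNNReal (by simpa using ENNReal.toNNReal_mono ENNReal.one_ne_top hp) n) k).toReal * ((k : ℕ) : ℝ) *
            Real.log (((k : ℕ) : ℝ) + 2) ^ α ≤
        C * ((n : ℝ) * p.toReal) * Real.log ((n : ℝ) * p.toReal + 2) ^ α := by
  refine ⟨2 ^ α * (1 + (2 ^ (2 * α + 1) + (2 * (2 * α + 1 : ℕ)) ^ (2 * α + 1))), by positivity,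
    fun n p hp hμ => ?_⟩
  have hq1 : p.toReal ≤ 1 := ENNReal.toReal_le_of_le_ofReal zero_le_one (by simpa using hp)
  calc _ = binomialExpect n p.toReal (fun k => k * log (k + 2) ^ α) := by
        simp only [mul_assoc]
        exact PMF.sum_binomial_toReal_mul _ _ n fun k => k * log (k + 2) ^ α
    _ ≤ _ := binomialExpect.mul_log_add_two_pow_le ENNReal.toReal_nonneg hq1 hμ α
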